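/- Let u and ū be locally bounded functions on [0,T]×ℝ^n and suppose ū is a viscosity supersolution of the variational inequality min{−∂_t v − F_0, Φ} = 0 (i.e. for every (p,q,X) ∈ 𝒫^{2,-}ū_*(t,x): Φ(x,ū_*(t,x),σ(x)ᵀq) ≥ 0 and −p − F_0(t,x,ū_*(t,x),q,X) ≥ 0). Then for every α ≥ 0, ū_* is a viscosity supersolution of the penalized PDE ∂_t v + F_0 + αΦ⁻ = 0. If moreover for each α, u_α is a viscosity solution of this penalized PDE satisfying the comparison principle u_α ≤ ū_* whenever ū_* is a supersolution with the same terminal data, and u = lim_{α→∞} u_α pointwise (nondecreasing), then u ≤ ū; i.e., u is the smallest viscosity supersolution of the variational inequality. -/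

import Mathlib

/-! The penalty `α Φ⁻` vanishes wherever the constraint `Φ ≥ 0` of the variational inequality
holds, so a supersolution of the variational inequality is a supersolution of every penalized
equation. Comparison then puts every `u_α`, hence their limit `u`, below `ū_*`, and `ū_* ≤ ū`
because `ū` is locally bounded below. -/

open scoped RealInnerProductSpace
open Filter Topology Matrix

noncomputable def quadForm {n : ℕ} (X : Matrix (Fin n) (Fin n) ℝ)
    (v : EuclideanSpace ℝ (Fin n)) : ℝ :=
  ∑ i, ∑ j, X i j * v i * v j

noncomputable def ParabolicSuperjet {n : ℕ} (u : ℝ × EuclideanSpace ℝ (Fin n) → ℝ)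
    (t : ℝ) (x : EuclideanSpace ℝ (Fin n))
    (p : ℝ) (q : EuclideanSpace ℝ (Fin n)) (X : Matrix (Fin n) (Fin n) ℝ) : Prop :=
  ∀ ε > 0, ∃ δ > 0, ∀ s y, |s - t| ≤ δ → ‖y - x‖ ≤ δ →
    u (s, y) ≤ u (t, x) + p * (s - t) + ⟪q, y - x⟫
      + (1/2) * quadForm X (y - x) + ε * (|s - t| + ‖y - x‖ ^ 2)

noncomputable def ParabolicSubjet {n : ℕ} (u : ℝ × EuclideanSpace ℝ (Fin n) → ℝ)
    (t : ℝ) (x : EuclideanSpace ℝ (Fin n))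
    (p : ℝ) (q : EuclideanSpace ℝ (Fin n)) (X : Matrix (Fin n) (Fin n) ℝ) : Prop :=
  ∀ ε > 0, ∃ δ > 0, ∀ s y, |s - t| ≤ δ → ‖y - x‖ ≤ δ →
    u (s, y) ≥ u (t, x) + p * (s - t) + ⟪q, y - x⟫
      + (1/2) * quadForm X (y - x) - ε * (|s - t| + ‖y - x‖ ^ 2)

noncomputable def negp (r : ℝ) : ℝ := max (-r) 0

noncomputable def toE {n : ℕ} (v : Fin n → ℝ) : EuclideanSpace ℝ (Fin n) :=
  (WithLp.equiv 2 (Fin n → ℝ)).symm v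

theorem negp_eq_zero_of_nonneg {r : ℝ} (hr : 0 ≤ r) : negp r = 0 :=
  max_eq_right (neg_nonpos.2 hr)

theorem penalized_supersolution_of_variational {n : ℕ} {T : ℝ}
    {F₀ : ℝ → EuclideanSpace ℝ (Fin n) → ℝ → EuclideanSpace ℝ (Fin n) →
      Matrix (Fin n) (Fin n) ℝ → ℝ}
    {Φ : EuclideanSpace ℝ (Fin n) → ℝ → (Fin n → ℝ) → ℝ}
    {σ : EuclideanSpace ℝ (Fin n) → Matrix (Fin n) (Fin n) ℝ}
    {w : ℝ × EuclideanSpace ℝ (Fin n) → ℝ}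
    (hsuper : ∀ t x p q X, t ∈ Set.Ioo (0 : ℝ) T → ParabolicSubjet w t x p q X →
      Φ x (w (t, x)) ((σ x)ᵀ.mulVec fun i => q i) ≥ 0 ∧ -p - F₀ t x (w (t, x)) q X ≥ 0)
    (α : ℝ) :
    ∀ t x p q X, t ∈ Set.Ioo (0 : ℝ) T → ParabolicSubjet w t x p q X →
      -p - F₀ t x (w (t, x)) q X -
        α * negp (Φ x (w (t, x)) ((σ x)ᵀ.mulVec fun i => q i)) ≥ 0 := by
  intro t x p q X ht hjet
  obtain ⟨hΦ, hF⟩ := hsuper t x p q X ht hjet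
  rwa [negp_eq_zero_of_nonneg hΦ, mul_zero, sub_zero]

theorem liminf_nhds_le_of_isBoundedUnder {X β : Type*} [TopologicalSpace X]
    [ConditionallyCompleteLattice β] {f : X → β} {z : X}
    (hf : IsBoundedUnder (· ≥ ·) (𝓝 z) f) : liminf f (𝓝 z) ≤ f z :=
  liminf_le_of_frequently_le
    ((frequently_pure.2 le_rfl : ∃ᶠ w in pure z, f w ≤ f z).filter_mono (pure_le_nhds z)) hf

theorem smallest_supersolution_general {n : ℕ} (T : ℝ)
    (F₀ : ℝ → EuclideanSpace ℝ (Fin n) → ℝ → EuclideanSpace ℝ (Fin n) →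
      Matrix (Fin n) (Fin n) ℝ → ℝ)
    (Φ : EuclideanSpace ℝ (Fin n) → ℝ → (Fin n → ℝ) → ℝ)
    (σ : EuclideanSpace ℝ (Fin n) → Matrix (Fin n) (Fin n) ℝ)
    (u ubar : ℝ × EuclideanSpace ℝ (Fin n) → ℝ)
    (hlocbar : ∀ z, ∃ C : ℝ, ∀ᶠ w in 𝓝 z, |ubar w| ≤ C)
    (hsuper : ∀ t x p q X, t ∈ Set.Ioo (0 : ℝ) T →
      ParabolicSubjet (fun z => Filter.liminf ubar (𝓝 z)) t x p q X →
      Φ x (Filter.liminf ubar (𝓝 (t, x))) ((σ x)ᵀ.mulVec fun i => q i) ≥ 0 ∧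
      -p - F₀ t x (Filter.liminf ubar (𝓝 (t, x))) q X ≥ 0)
    (uα : ℕ → ℝ × EuclideanSpace ℝ (Fin n) → ℝ)
    (hcomp : ∀ α : ℕ,
      (∀ t x p q X, t ∈ Set.Ioo (0 : ℝ) T →
        ParabolicSubjet (fun z => Filter.liminf ubar (𝓝 z)) t x p q X →
        -p - F₀ t x (Filter.liminf ubar (𝓝 (t, x))) q X -
          (α : ℝ) * negp (Φ x (Filter.liminf ubar (𝓝 (t, x)))
            ((σ x)ᵀ.mulVec fun i => q i)) ≥ 0) →
      ∀ z, uα α z ≤ Filter.liminf ubar (𝓝 z))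
    (hlim : ∀ z, Tendsto (fun α => uα α z) atTop (𝓝 (u z))) :
    (∀ α : ℕ, ∀ t x p q X, t ∈ Set.Ioo (0 : ℝ) T →
      ParabolicSubjet (fun z => Filter.liminf ubar (𝓝 z)) t x p q X →
      -p - F₀ t x (Filter.liminf ubar (𝓝 (t, x))) q X -
        (α : ℝ) * negp (Φ x (Filter.liminf ubar (𝓝 (t, x)))
          ((σ x)ᵀ.mulVec fun i => q i)) ≥ 0) ∧
    ∀ z, u z ≤ ubar z := by
  have hpen : ∀ α : ℕ, _ := fun α =>
    penalized_supersolution_of_variational (w := fun z => Filter.liminf ubar (𝓝 z)) hsuper α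
  refine ⟨hpen, fun z => ?_⟩
  have hbdd : IsBoundedUnder (· ≥ ·) (𝓝 z) ubar := by
    obtain ⟨C, hC⟩ := hlocbar z
    exact isBoundedUnder_of_eventually_ge (hC.mono fun w hw => neg_le_of_abs_le hw)
  calc u z ≤ Filter.liminf ubar (𝓝 z) :=
        le_of_tendsto' (hlim z) fun α => hcomp α (hpen α) z
    _ ≤ ubar z := liminf_nhds_le_of_isBoundedUnder hbdd

/-- If `ū` is a viscosity supersolution of the variational inequality
`min{-∂ₜv - F₀, Φ} = 0`, then for every `α`, its lower envelope `ū_*` is a viscosity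
supersolution of the penalized PDE `∂ₜv + F₀ + αΦ⁻ = 0`; and if the penalized viscosity
solutions `u_α` satisfy the comparison principle (they lie below any supersolution of the
penalized equation) and increase pointwise to `u`, then `u ≤ ū`: `u` is the smallest
viscosity supersolution of the variational inequality. -/
theorem smallest_supersolution {n : ℕ} (T : ℝ)
    (F₀ : ℝ → EuclideanSpace ℝ (Fin n) → ℝ → EuclideanSpace ℝ (Fin n) →
      Matrix (Fin n) (Fin n) ℝ → ℝ)
    (Φ : EuclideanSpace ℝ (Fin n) → ℝ → (Fin n → ℝ) → ℝ)
    (σ : EuclideanSpace ℝ (Fin n) → Matrix (Fin n) (Fin n) ℝ)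
    (u ubar : ℝ × EuclideanSpace ℝ (Fin n) → ℝ)
    (hloc : ∀ z, ∃ C : ℝ, ∀ᶠ w in 𝓝 z, |u w| ≤ C)
    (hlocbar : ∀ z, ∃ C : ℝ, ∀ᶠ w in 𝓝 z, |ubar w| ≤ C)
    (hsuper : ∀ t x p q X, t ∈ Set.Ioo (0 : ℝ) T →
      ParabolicSubjet (fun z => Filter.liminf ubar (𝓝 z)) t x p q X →
      Φ x (Filter.liminf ubar (𝓝 (t, x))) ((σ x)ᵀ.mulVec fun i => q i) ≥ 0 ∧
      -p - F₀ t x (Filter.liminf ubar (𝓝 (t, x))) q X ≥ 0)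
    (uα : ℕ → ℝ × EuclideanSpace ℝ (Fin n) → ℝ)
    (hcomp : ∀ α : ℕ,
      (∀ t x p q X, t ∈ Set.Ioo (0 : ℝ) T →
        ParabolicSubjet (fun z => Filter.liminf ubar (𝓝 z)) t x p q X →
        -p - F₀ t x (Filter.liminf ubar (𝓝 (t, x))) q X -
          (α : ℝ) * negp (Φ x (Filter.liminf ubar (𝓝 (t, x)))
            ((σ x)ᵀ.mulVec fun i => q i)) ≥ 0) →
      ∀ z, uα α z ≤ Filter.liminf ubar (𝓝 z))
    (hmono : ∀ α z, uα α z ≤ uα (α + 1) z)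
    (hlim : ∀ z, Tendsto (fun α => uα α z) atTop (𝓝 (u z))) :
    (∀ α : ℕ, ∀ t x p q X, t ∈ Set.Ioo (0 : ℝ) T →
      ParabolicSubjet (fun z => Filter.liminf ubar (𝓝 z)) t x p q X →
      -p - F₀ t x (Filter.liminf ubar (𝓝 (t, x))) q X -
        (α : ℝ) * negp (Φ x (Filter.liminf ubar (𝓝 (t, x)))
          ((σ x)ᵀ.mulVec fun i => q i)) ≥ 0) ∧
    ∀ z, u z ≤ ubar z :=
  smallest_supersolution_general T F₀ Φ σ u ubar hlocbar hsuper uα hcomp hlim
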